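/- arXiv:2304.02864 — 6 statements merged into one kernel-verified Lean document; each statement's English description precedes it below -/
import Mathlib

section
/- Let A and B be vertices of X = J(v,k,i) and let x = |A ∩ B|. Then A and B have a common neighbor in X if and only if x ≥ max{k − Δ, 2i − k}. -/
/-- The generalized Johnson graph `J(v,k,i)`: vertices are the `k`-element subsets of a
`v`-element set, two vertices adjacent iff their intersection has exactly `i` elements. -/
def genJohnsonGraph (v k i : ℕ) :
    SimpleGraph {A : Finset (Fin v) // A.card = k} where
  Adj A B := A ≠ B ∧ (A.1 ∩ B.1).card = i
  symm := by
    constructor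
    rintro A B ⟨hne, hcard⟩
    exact ⟨hne.symm, by rwa [Finset.inter_comm]⟩
  loopless := by constructor; rintro A ⟨hne, -⟩; exact hne rfl

/-!
Write `x = |A ∩ B|`. Necessity: `(A ∩ C) ∪ (B ∩ C) ⊆ C` gives `2i ≤ k + x`, and
`|A ∪ B ∪ C| ≤ v` together with `|C ∩ (A ∪ B)| ≤ 2i` gives `3k ≤ v + x + 2i`.
Sufficiency: build `C` from `a = max (2i - k) (i + x - k)` points of `A ∩ B`, `i - a` points of each
of `A \ B` and `B \ A`, and `k - 2i + a` points outside `A ∪ B`; the bound on `x` (with `2k ≤ v`)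
is exactly what makes every region large enough. Since `i < k`, such a `C` differs from `A` and `B`.
-/

namespace Finset

variable {α : Type*} [DecidableEq α]

theorem card_inter_add_card_inter_le (s t u : Finset α) :
    #(s ∩ u) + #(t ∩ u) ≤ #u + #(s ∩ t) :=
  calc #(s ∩ u) + #(t ∩ u) = #(s ∩ u ∪ t ∩ u) + #(s ∩ u ∩ (t ∩ u)) :=
        (card_union_add_card_inter _ _).symm
    _ ≤ #u + #(s ∩ t) :=
        add_le_add (card_le_card (union_subset inter_subset_right inter_subset_right))
          (card_le_card (inter_subset_inter inter_subset_left inter_subset_left))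

theorem card_add_card_add_card_le (s t u : Finset α) :
    #s + #t + #u ≤ #(s ∪ t ∪ u) + #(s ∩ t) + #(s ∩ u) + #(t ∩ u) := by
  have hstu := card_union_add_card_inter (s ∪ t) u
  have hst := card_union_add_card_inter s t
  have hinter : #((s ∪ t) ∩ u) ≤ #(s ∩ u) + #(t ∩ u) := by
    rw [union_inter_distrib_right]
    exact card_union_le _ _
  omega

theorem exists_subset_card_eq_card_inter_eq {s t : Finset α} {a b : ℕ}
    (ha : a ≤ #(s ∩ t)) (hb : b ≤ #(s \ t)) :
    ∃ w ⊆ s, #w = a + b ∧ #(w ∩ t) = a := by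
  obtain ⟨w₁, hw₁, rfl⟩ := exists_subset_card_eq ha
  obtain ⟨w₂, hw₂, rfl⟩ := exists_subset_card_eq hb
  have hw₁t : w₁ ⊆ t := hw₁.trans inter_subset_right
  have hw₂t : Disjoint w₂ t := disjoint_of_subset_left hw₂ sdiff_disjoint
  refine ⟨w₁ ∪ w₂, union_subset (hw₁.trans inter_subset_left) (hw₂.trans sdiff_subset),
    card_union_of_disjoint (disjoint_of_subset_left hw₁t hw₂t.symm), ?_⟩
  rw [union_inter_distrib_right, inter_eq_left.2 hw₁t, disjoint_iff_inter_eq_empty.1 hw₂t,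
    union_empty]

variable [Fintype α]

theorem exists_card_eq_card_inter_eq {s t : Finset α} {a b c d : ℕ}
    (ha : a ≤ #(s ∩ t)) (hb : b ≤ #(s \ t)) (hc : c ≤ #(t \ s)) (hd : d ≤ #(s ∪ t)ᶜ) :
    ∃ u, #u = a + b + c + d ∧ #(s ∩ u) = a + b ∧ #(t ∩ u) = a + c := by
  obtain ⟨w₁, hw₁s, hw₁, hw₁t⟩ := exists_subset_card_eq_card_inter_eq ha hb
  obtain ⟨w₂, hw₂s, hw₂, hw₂t⟩ := exists_subset_card_eq_card_inter_eq
    (s := sᶜ) (t := t) (a := c) (b := d) (by rwa [inter_comm, ← sdiff_eq_inter_compl])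
    (by rwa [sdiff_eq_inter_compl, ← compl_union])
  have hdisj : Disjoint w₁ w₂ :=
    disjoint_of_subset_left hw₁s (disjoint_of_subset_right hw₂s disjoint_compl_right)
  refine ⟨w₁ ∪ w₂, ?_, ?_, ?_⟩
  · rw [card_union_of_disjoint hdisj, hw₁, hw₂]
    ac_rfl
  · rw [inter_union_distrib_left, inter_eq_right.2 hw₁s,
      disjoint_iff_inter_eq_empty.1 (disjoint_of_subset_right hw₂s disjoint_compl_right),
      union_empty, hw₁]
  · rw [inter_comm t, union_inter_distrib_right,
      card_union_of_disjoint (hdisj.mono inter_subset_left inter_subset_left), hw₁t, hw₂t]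

theorem exists_card_inter_eq_iff {s t : Finset α} {k i : ℕ} (hs : #s = k) (ht : #t = k)
    (h2k : 2 * k ≤ Fintype.card α) :
    (∃ u, #u = k ∧ #(s ∩ u) = i ∧ #(t ∩ u) = i) ↔
      max (k - (Fintype.card α - 2 * k + 2 * i)) (2 * i - k) ≤ #(s ∩ t) := by
  constructor
  · rintro ⟨u, hu, hsu, htu⟩
    have := card_inter_add_card_inter_le s t u
    have := card_add_card_add_card_le s t u
    have := card_le_univ (s ∪ t ∪ u)
    omega
  · intro hx
    have hst := card_inter_add_card_sdiff s t
    have hts := card_inter_add_card_sdiff t s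
    rw [inter_comm] at hts
    have hunion := card_union_add_card_inter s t
    have hcompl := card_compl (s ∪ t)
    set a := max (2 * i - k) (i - (k - #(s ∩ t)))
    obtain ⟨u, hu, hsu, htu⟩ := exists_card_eq_card_inter_eq (s := s) (t := t)
      (a := a) (b := i - a) (c := i - a) (d := k - (2 * i - a))
      (by omega) (by omega) (by omega) (by omega)
    exact ⟨u, by omega, by omega, by omega⟩

end Finset

open Finset

theorem genJohnsonGraph_adj_iff {v k i : ℕ} (hki : k ≠ i)
    {A B : {A : Finset (Fin v) // #A = k}} :
    (genJohnsonGraph v k i).Adj A B ↔ #(A.1 ∩ B.1) = i :=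
  ⟨And.right, fun h => ⟨by rintro rfl; rw [inter_self, A.2] at h; exact hki h, h⟩⟩

theorem commonNeighbor_iff_general (v k i : ℕ) (hik : i < k)
    (h2k : 2 * k ≤ v)
    (A B : {A : Finset (Fin v) // A.card = k}) :
    (∃ C, (genJohnsonGraph v k i).Adj A C ∧ (genJohnsonGraph v k i).Adj B C) ↔
      max (k - (v - 2 * k + 2 * i)) (2 * i - k) ≤ (A.1 ∩ B.1).card := by
  have key := exists_card_inter_eq_iff (i := i) A.2 B.2 (by rwa [Fintype.card_fin])
  rw [Fintype.card_fin] at key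
  simp only [genJohnsonGraph_adj_iff hik.ne', ← key]
  exact ⟨fun ⟨C, hC⟩ => ⟨C.1, C.2, hC⟩, fun ⟨u, hu, hu'⟩ => ⟨⟨u, hu⟩, hu'⟩⟩

/-- Common Neighbor Condition: vertices `A` and `B` of `J(v,k,i)` have a common neighbor
iff `|A ∩ B| ≥ max {k - Δ, 2i - k}`, where `Δ = v - 2k + 2i`. -/
theorem commonNeighbor_iff (v k i : ℕ) (hik : i < k) (hkv : k < v)
    (h2k : 2 * k ≤ v) (hexc : ¬(v = 2 * k ∧ i = 0))
    (A B : {A : Finset (Fin v) // A.card = k}) :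
    (∃ C, (genJohnsonGraph v k i).Adj A C ∧ (genJohnsonGraph v k i).Adj B C) ↔
      max (k - (v - 2 * k + 2 * i)) (2 * i - k) ≤ (A.1 ∩ B.1).card :=
  commonNeighbor_iff_general v k i hik h2k A B
end

section
/- If (v,k,i) ≠ (2k+1,k,0), then the girth of X = J(v,k,i) is at most 4; that is, X contains a cycle of length 3 or 4. -/
open Finset

namespace Finset

variable {α : Type*} [DecidableEq α]

theorem exists_subsets_card_inter_eq {s : Finset α} {u j : ℕ} (hj : j ≤ u)
    (hs : 2 * u - j ≤ #s) : ∃ U ⊆ s, ∃ W ⊆ s, #U = u ∧ #W = u ∧ #(U ∩ W) = j := by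
  obtain ⟨T, hTs, hT⟩ := exists_subset_card_eq hs
  obtain ⟨U, hUT, hU⟩ := exists_subset_card_eq (show u ≤ #T by omega)
  obtain ⟨S, hSU, hS⟩ := exists_subset_card_eq (show j ≤ #U by omega)
  have hST : Disjoint S (T \ U) := disjoint_sdiff.mono_left hSU
  refine ⟨U, hUT.trans hTs, S ∪ T \ U, union_subset (hSU.trans (hUT.trans hTs))
    (sdiff_subset.trans hTs), hU, ?_, ?_⟩
  · rw [card_union_of_disjoint hST, card_sdiff_of_subset hUT]
    omega
  · rw [inter_union_distrib_left, inter_sdiff_self, union_empty, inter_eq_right.2 hSU, hS]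

theorem card_union_inter_union {U W s t : Finset α} (hsW : Disjoint s W) (htU : Disjoint t U) :
    #((U ∪ s) ∩ (W ∪ t)) = #(U ∩ W) + #(s ∩ t) := by
  have h : (U ∪ s) ∩ (W ∪ t) = U ∩ W ∪ s ∩ t := by
    ext x
    have hx₁ : x ∈ s → x ∉ W := fun h => disjoint_left.1 hsW h
    have hx₂ : x ∈ t → x ∉ U := fun h => disjoint_left.1 htU h
    simp only [mem_union, mem_inter]
    tauto
  rw [h, card_union_of_disjoint (hsW.mono inter_subset_left inter_subset_right).symm]

theorem pair_inter_pair_of_ne {a b c : α} (h : a ≠ c) : ({a, b} ∩ {b, c} : Finset α) = {b} := by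
  ext x
  simp only [mem_inter, mem_insert, mem_singleton]
  grind

end Finset

namespace SimpleGraph

variable {V : Type*} (G : SimpleGraph V)

def HasCycleOfLength (n : ℕ) : Prop := ∃ (a : V) (w : G.Walk a a), w.IsCycle ∧ w.length = n

variable {G}

lemma hasCycleOfLength_four {a b c d : V} (hab : G.Adj a b) (hbc : G.Adj b c) (hcd : G.Adj c d)
    (hda : G.Adj d a) (hac : a ≠ c) (hbd : b ≠ d) : G.HasCycleOfLength 4 := by
  refine ⟨a, .cons hab (.cons hbc (.cons hcd (.cons hda .nil))), ?_, rfl⟩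
  simp [Walk.cons_isCycle_iff, hab.ne, hbc.ne, hcd.ne, hda.ne, hab.ne.symm, hac, hac.symm, hbd]

end SimpleGraph

section genJohnsonGraph

variable {v k i : ℕ}

lemma genJohnsonGraph_adj_mk (hik : i < k) {A B : Finset (Fin v)} (hA : #A = k) (hB : #B = k) :
    (genJohnsonGraph v k i).Adj ⟨A, hA⟩ ⟨B, hB⟩ ↔ #(A ∩ B) = i := by
  refine ⟨And.right, fun h => ⟨fun hAB => ?_, h⟩⟩
  cases hAB
  rw [inter_self] at h
  omega

lemma genJohnsonGraph_hasCycleOfLength_four_of_card_inter (hik : i < k)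
    {A B C D : Finset (Fin v)} (hA : #A = k) (hB : #B = k) (hC : #C = k) (hD : #D = k)
    (hAB : #(A ∩ B) = i) (hBC : #(B ∩ C) = i) (hCD : #(C ∩ D) = i) (hDA : #(D ∩ A) = i)
    (hAC : A ≠ C) (hBD : B ≠ D) : (genJohnsonGraph v k i).HasCycleOfLength 4 :=
  SimpleGraph.hasCycleOfLength_four ((genJohnsonGraph_adj_mk hik hA hB).2 hAB)
    ((genJohnsonGraph_adj_mk hik hB hC).2 hBC) ((genJohnsonGraph_adj_mk hik hC hD).2 hCD)
    ((genJohnsonGraph_adj_mk hik hD hA).2 hDA) (by simpa using hAC) (by simpa using hBD)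

lemma genJohnsonGraph_zero_hasCycleOfLength_four (hk : 0 < k) (hv : 2 * k + 2 ≤ v) :
    (genJohnsonGraph v k 0).HasCycleOfLength 4 := by
  obtain ⟨X, -, Y, -, hX, hY, hXY⟩ := exists_subsets_card_inter_eq (s := (univ : Finset (Fin v)))
    (u := k + 1) (j := 0) (Nat.zero_le _) (by rw [card_univ, Fintype.card_fin]; omega)
  obtain ⟨a, ha, c, hc, hac⟩ := one_lt_card.1 (show 1 < #X by omega)
  obtain ⟨b, hb, d, hd, hbd⟩ := one_lt_card.1 (show 1 < #Y by omega)
  have hXY' : ∀ x y, #(X.erase x ∩ Y.erase y) = 0 := fun x y => Nat.eq_zero_of_le_zero <|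
    hXY ▸ card_le_card (inter_subset_inter (erase_subset x X) (erase_subset y Y))
  have hYX' : ∀ x y, #(Y.erase y ∩ X.erase x) = 0 := fun x y =>
    inter_comm (Y.erase y) _ ▸ hXY' x y
  exact genJohnsonGraph_hasCycleOfLength_four_of_card_inter hk (A := X.erase a) (B := Y.erase b)
    (C := X.erase c) (D := Y.erase d) (by simp [ha, hX]) (by simp [hb, hY]) (by simp [hc, hX])
    (by simp [hd, hY]) (hXY' a b) (hYX' c b) (hXY' c d) (hYX' a d) (X.erase_injOn.ne ha hc hac)
    (Y.erase_injOn.ne hb hd hbd)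

lemma genJohnsonGraph_hasCycleOfLength_four_of_pos (hi : 0 < i) (hik : i < k)
    (hv : 2 * k + 1 ≤ v + i) : (genJohnsonGraph v k i).HasCycleOfLength 4 := by
  obtain ⟨F, -, hF⟩ := exists_subset_card_eq (s := (univ : Finset (Fin v))) (n := 4)
    (by rw [card_univ, Fintype.card_fin]; omega)
  obtain ⟨U, hU, W, hW, hUc, hWc, hUW⟩ := exists_subsets_card_inter_eq (s := Fᶜ) (u := k - 2)
    (j := i - 1) (by omega) (by rw [card_compl, hF, Fintype.card_fin]; omega)
  have hWU : #(W ∩ U) = i - 1 := inter_comm U W ▸ hUW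
  have hpair : ∀ {p q}, p ∈ F → q ∈ F → Disjoint {p, q} U ∧ Disjoint {p, q} W := fun hp hq =>
    have hpq := disjoint_compl_right.mono_left (insert_subset hp (singleton_subset_iff.2 hq))
    ⟨hpq.mono_right hU, hpq.mono_right hW⟩
  have hcard : ∀ {X : Finset (Fin v)} {p q}, #X = k - 2 → Disjoint {p, q} X → p ≠ q →
      #(X ∪ {p, q}) = k := fun hX h hpq => by
    rw [card_union_of_disjoint h.symm, card_pair hpq]
    omega
  have hinter : ∀ {X Y : Finset (Fin v)} {p q r}, #(X ∩ Y) = i - 1 → Disjoint {p, q} Y →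
      Disjoint {q, r} X → p ≠ r → #((X ∪ {p, q}) ∩ (Y ∪ {q, r})) = i := fun hXY hY hX hpr => by
    rw [card_union_inter_union hY hX, pair_inter_pair_of_ne hpr, card_singleton]
    omega
  obtain ⟨a, b, c, d, hab, hac, had, hbc, hbd, hcd, rfl⟩ := card_eq_four.1 hF
  have hAB := hpair (p := a) (q := b) (by simp) (by simp)
  have hBC := hpair (p := b) (q := c) (by simp) (by simp)
  have hCD := hpair (p := c) (q := d) (by simp) (by simp)
  have hDA := hpair (p := d) (q := a) (by simp) (by simp)
  have hAC : U ∪ {a, b} ≠ U ∪ {c, d} := fun h => by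
    have ha : a ∈ U ∪ {c, d} := h ▸ by simp
    simp [hac, had, disjoint_left.1 hAB.1 (mem_insert_self a _)] at ha
  have hBD : W ∪ {b, c} ≠ W ∪ {d, a} := fun h => by
    have hb : b ∈ W ∪ {d, a} := h ▸ by simp
    simp [hbd, hab.symm, disjoint_left.1 hBC.2 (mem_insert_self b _)] at hb
  exact genJohnsonGraph_hasCycleOfLength_four_of_card_inter hik (hcard hUc hAB.1 hab)
    (hcard hWc hBC.2 hbc) (hcard hUc hCD.1 hcd) (hcard hWc hDA.2 had.symm)
    (hinter hUW hAB.2 hBC.1 hac) (hinter hWU hBC.1 hCD.2 hbd) (hinter hUW hCD.2 hDA.1 hac.symm)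
    (hinter hWU hDA.1 hAB.2 hbd.symm) hAC hBD

end genJohnsonGraph

theorem girth_le_four_general (v k i : ℕ) (hik : i < k)
    (h2k : 2 * k ≤ v) (hexc : ¬(v = 2 * k ∧ i = 0))
    (hodd : ¬(v = 2 * k + 1 ∧ i = 0)) :
    (genJohnsonGraph v k i).girth ≤ 4 ∧
      ∃ (A : {A : Finset (Fin v) // A.card = k})
        (c : (genJohnsonGraph v k i).Walk A A),
        c.IsCycle ∧ (c.length = 3 ∨ c.length = 4) := by
  have hcycle : (genJohnsonGraph v k i).HasCycleOfLength 4 := by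
    rcases Nat.eq_zero_or_pos i with rfl | hi
    · exact genJohnsonGraph_zero_hasCycleOfLength_four hik (by omega)
    · exact genJohnsonGraph_hasCycleOfLength_four_of_pos hi hik (by omega)
  obtain ⟨A, c, hc, hlen⟩ := hcycle
  exact ⟨hlen ▸ SimpleGraph.girth_le_length hc, A, c, hc, Or.inr hlen⟩

/-- If `(v,k,i) ≠ (2k+1,k,0)`, then the girth of `J(v,k,i)` is at most 4:
`X` contains a cycle of length 3 or 4. -/
theorem girth_le_four (v k i : ℕ) (hik : i < k) (hkv : k < v)
    (h2k : 2 * k ≤ v) (hexc : ¬(v = 2 * k ∧ i = 0))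
    (hodd : ¬(v = 2 * k + 1 ∧ i = 0)) :
    (genJohnsonGraph v k i).girth ≤ 4 ∧
      ∃ (A : {A : Finset (Fin v) // A.card = k})
        (c : (genJohnsonGraph v k i).Walk A A),
        c.IsCycle ∧ (c.length = 3 ∨ c.length = 4) :=
  girth_le_four_general v k i hik h2k hexc hodd
end

section
/- Let A and B be vertices of X = J(v,k,i) and let x = |A ∩ B|. If there is a walk of even length 2p from A to B in X, then p ≥ ⌈(k − x)/Δ⌉. -/
/-!
`d(X, Y) = |X \ Y|` is a metric on the `k`-subsets (half the symmetric-difference distance),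
and two steps of `J(v,k,i)` move a vertex by at most `Δ = v - 2k + 2i` in it: if `C ~ D ~ E`,
then `C \ D` and `E \ D` are two `(k - i)`-subsets of the `(v - k)`-set `Dᶜ`, so they share at
least `2(k - i) - (v - k)` points, all of which lie in `C ∩ E`. Along a walk of length `2p`
from `A` to `B` the triangle inequality then gives `k - |A ∩ B| = d(A, B) ≤ pΔ`.
-/

open Finset

lemma Nat.ceilDiv_le_of_le_mul {a b c : ℕ} (h : a ≤ b * c) : a ⌈/⌉ b ≤ c := by
  rcases Nat.eq_zero_or_pos b with rfl | hb
  · simp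
  · exact (ceilDiv_le_iff_le_mul hb).2 h

lemma Finset.card_sdiff_le_card_sdiff_add_card_sdiff {α : Type*} [DecidableEq α]
    (s t u : Finset α) : #(s \ u) ≤ #(s \ t) + #(t \ u) :=
  (card_le_card (sdiff_triangle s t u)).trans (card_union_le _ _)

lemma Finset.card_sdiff_le_of_card_inter_eq {α : Type*} [Fintype α] [DecidableEq α]
    {C D E : Finset α} {k i : ℕ} (hC : #C = k) (hD : #D = k) (hE : #E = k)
    (hCD : #(C ∩ D) = i) (hDE : #(D ∩ E) = i) :
    #(C \ E) ≤ Fintype.card α - 2 * k + 2 * i := by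
  have hED : #(E ∩ D) = i := by rwa [inter_comm]
  have hcover : #((C \ D) ∪ (E \ D)) ≤ Fintype.card α - k := by
    rw [← hD, ← card_compl, ← union_sdiff_distrib, sdiff_eq_inter_compl]
    exact card_le_card inter_subset_right
  have hshared : #((C \ D) ∩ (E \ D)) ≤ #(C ∩ E) :=
    card_le_card (inter_subset_inter sdiff_subset sdiff_subset)
  have := card_union_add_card_inter (C \ D) (E \ D)
  have := card_sdiff_add_card_inter C D
  have := card_sdiff_add_card_inter E D
  have := card_sdiff_add_card_inter C E
  omega

lemma genJohnsonGraph.card_sdiff_le_of_length_eq {v k i : ℕ} (p : ℕ)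
    {A B : {A : Finset (Fin v) // A.card = k}} (w : (genJohnsonGraph v k i).Walk A B)
    (hw : w.length = 2 * p) : #(A.1 \ B.1) ≤ p * (v - 2 * k + 2 * i) := by
  induction p generalizing A with
  | zero =>
    obtain rfl := SimpleGraph.Walk.eq_of_length_eq_zero hw
    simp
  | succ p ih =>
    obtain _ | @⟨_, C, _, hAC, _ | @⟨_, D, _, hCD, w⟩⟩ := w
    · simp at hw
    · simp at hw; omega
    · have htwo : #(A.1 \ D.1) ≤ v - 2 * k + 2 * i := by
        simpa using card_sdiff_le_of_card_inter_eq A.2 C.2 D.2 hAC.2 hCD.2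
      calc #(A.1 \ B.1) ≤ #(A.1 \ D.1) + #(D.1 \ B.1) :=
            card_sdiff_le_card_sdiff_add_card_sdiff _ _ _
        _ ≤ (v - 2 * k + 2 * i) + p * (v - 2 * k + 2 * i) :=
            add_le_add htwo (ih w (by simp at hw; omega))
        _ = (p + 1) * (v - 2 * k + 2 * i) := by ring

theorem even_walk_bound_general (v k i : ℕ)
    (A B : {A : Finset (Fin v) // A.card = k}) (p : ℕ)
    (w : (genJohnsonGraph v k i).Walk A B) (hw : w.length = 2 * p) :
    (k - (A.1 ∩ B.1).card) ⌈/⌉ (v - 2 * k + 2 * i) ≤ p := by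
  have hsdiff : #(A.1 \ B.1) = k - #(A.1 ∩ B.1) := by rw [card_sdiff, inter_comm, A.2]
  apply Nat.ceilDiv_le_of_le_mul
  rw [mul_comm, ← hsdiff]
  exact genJohnsonGraph.card_sdiff_le_of_length_eq p w hw

/-- If there is a walk of even length `2p` from `A` to `B` in `J(v,k,i)`,
then `p ≥ ⌈(k - x)/Δ⌉` where `x = |A ∩ B|`. -/
theorem even_walk_bound (v k i : ℕ) (hik : i < k) (hkv : k < v)
    (h2k : 2 * k ≤ v) (hexc : ¬(v = 2 * k ∧ i = 0))
    (A B : {A : Finset (Fin v) // A.card = k}) (p : ℕ)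
    (w : (genJohnsonGraph v k i).Walk A B) (hw : w.length = 2 * p) :
    (k - (A.1 ∩ B.1).card) ⌈/⌉ (v - 2 * k + 2 * i) ≤ p :=
  even_walk_bound_general v k i A B p w hw
end

section
/- Let A and B be vertices of X = J(v,k,i) and let x = |A ∩ B|. If x > i, then the distance between A and B in X equals min{2⌈(k − x)/Δ⌉, 2⌈(x − i)/Δ⌉ + 1}. -/
/-!
Along an edge `C ~ D` of `J(v,k,i)` one has `k - Δ + i ≤ |C ∩ B| + |D ∩ B| ≤ k + i` for every
vertex `B`. Hence after `2m` steps from `A` the intersection with `B` is at least `k - mΔ`, and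
after `2m + 1` steps at most `i + mΔ`, which gives the lower bound. Conversely any two vertices
with `i ≤ |C ∩ D|` and `|C ∩ D| ≥ k - Δ` have a common neighbour, so in two steps one can raise
`|· ∩ B|` by `Δ` (towards `B`) or lower it by `Δ` (towards a neighbour of `B`), which realizes
both bounds.
-/

open Finset

namespace Finset

variable {α : Type*} [DecidableEq α]

theorem card_inter_add_card_inter_le_s8 (B C D : Finset α) :
    #(B ∩ C) + #(B ∩ D) ≤ #B + #(C ∩ D) := by
  rw [← card_union_add_card_inter]
  refine add_le_add (card_le_card (union_subset inter_subset_left inter_subset_left))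
    (card_le_card fun x => ?_)
  simp only [mem_inter]; tauto

theorem card_add_card_union_le [Fintype α] (B C D : Finset α) :
    #B + #(C ∪ D) ≤ #(B ∩ C) + #(B ∩ D) + Fintype.card α := by
  have h₁ := card_union_add_card_inter B (C ∪ D)
  have h₂ : #(B ∩ (C ∪ D)) ≤ #(B ∩ C) + #(B ∩ D) := by
    rw [inter_union_distrib_left]; exact card_union_le _ _
  have h₃ := card_le_univ (B ∪ (C ∪ D))
  omega

theorem exists_subset_card_eq_card_inter_eq_s8 {U C : Finset α} {p q : ℕ}
    (hp : p ≤ #(U ∩ C)) (hq : q ≤ #(U \ C)) :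
    ∃ E ⊆ U, #E = p + q ∧ #(E ∩ C) = p := by
  obtain ⟨S, hSU, rfl⟩ := exists_subset_card_eq hp
  obtain ⟨R, hRU, rfl⟩ := exists_subset_card_eq hq
  have hSR : Disjoint S R := (disjoint_sdiff_inter U C).symm.mono hSU hRU
  refine ⟨S ∪ R, union_subset (hSU.trans inter_subset_left) (hRU.trans sdiff_subset),
    card_union_of_disjoint hSR, ?_⟩
  have hS : S ∩ C = S := inter_eq_left.2 (hSU.trans inter_subset_right)
  have hR : R ∩ C = ∅ := disjoint_iff_inter_eq_empty.1 (sdiff_disjoint.mono_left hRU)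
  rw [union_inter_distrib_right, hS, hR, union_empty]

/-- `a, b, c, d` are the numbers of points of `E` in `C ∩ D`, `C \ D`, `D \ C` and `(C ∪ D)ᶜ`. -/
theorem exists_card_inter_eq_of_le [Fintype α] {C D : Finset α} {a b c d : ℕ}
    (ha : a ≤ #(C ∩ D)) (hb : b + #(C ∩ D) ≤ #C) (hc : c + #(C ∩ D) ≤ #D)
    (hd : d + #(C ∪ D) ≤ Fintype.card α) :
    ∃ E : Finset α, #E = a + b + c + d ∧ #(E ∩ C) = a + b ∧ #(E ∩ D) = a + c := by
  obtain ⟨E₁, hE₁C, hE₁, hE₁D⟩ := exists_subset_card_eq_card_inter_eq_s8 (U := C) (C := D)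
    (p := a) (q := b) ha (by rw [card_sdiff, inter_comm]; omega)
  obtain ⟨E₂, hE₂C, hE₂, hE₂D⟩ := exists_subset_card_eq_card_inter_eq_s8 (U := Cᶜ) (C := D)
    (p := c) (q := d) (by rw [inter_comm, ← sdiff_eq_inter_compl, card_sdiff]; omega)
    (by rw [sdiff_eq_inter_compl, ← compl_union, card_compl]; omega)
  have hE₁₂ : Disjoint E₁ E₂ := disjoint_compl_right.mono hE₁C hE₂C
  refine ⟨E₁ ∪ E₂, by rw [card_union_of_disjoint hE₁₂]; omega, ?_, ?_⟩
  · rw [union_inter_distrib_right, inter_eq_left.2 hE₁C,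
      disjoint_iff_inter_eq_empty.1 (disjoint_compl_left.mono_left hE₂C), union_empty, hE₁]
  · rw [union_inter_distrib_right, card_union_of_disjoint
      (hE₁₂.mono inter_subset_left inter_subset_left), hE₁D, hE₂D]

end Finset

namespace genJohnsonGraph

open SimpleGraph

variable {v k i : ℕ}

local notation "Δ" => v - 2 * k + 2 * i

theorem adj_of_card_inter_eq (hik : i < k) {C D : {A : Finset (Fin v) // A.card = k}}
    (h : #(C.1 ∩ D.1) = i) : (genJohnsonGraph v k i).Adj C D := by
  refine ⟨fun hCD => ?_, h⟩
  rw [hCD, inter_self, D.2] at h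
  omega

theorem eq_of_le_card_inter {C D : {A : Finset (Fin v) // A.card = k}}
    (h : k ≤ #(C.1 ∩ D.1)) : C = D := by
  have hC : C.1 ∩ D.1 = C.1 := eq_of_subset_of_card_le inter_subset_left (by rwa [C.2])
  exact Subtype.ext (eq_of_subset_of_card_le (inter_eq_left.1 hC) (by rw [C.2, D.2]))

theorem card_inter_bounds_of_walk (h2k : 2 * k ≤ v) {C B : {A : Finset (Fin v) // A.card = k}}
    (p : (genJohnsonGraph v k i).Walk C B) :
    (∀ m, p.length = 2 * m → k ≤ #(C.1 ∩ B.1) + m * Δ) ∧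
      (∀ m, p.length = 2 * m + 1 → #(C.1 ∩ B.1) ≤ i + m * Δ) := by
  induction p with
  | @nil C =>
    refine ⟨fun m _ => ?_, fun m hm => by simp at hm⟩
    rw [inter_self, C.2]
    exact Nat.le_add_right _ _
  | @cons C D B hCD p ih =>
    replace hCD := hCD.2
    simp only [Walk.length_cons]
    have hupper := card_inter_add_card_inter_le_s8 B.1 C.1 D.1
    have hlower := card_add_card_union_le B.1 C.1 D.1
    have hunion := card_union_add_card_inter C.1 D.1
    rw [B.2, hCD, inter_comm B.1, inter_comm B.1] at hupper
    rw [B.2, Fintype.card_fin, inter_comm B.1, inter_comm B.1] at hlower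
    rw [C.2, D.2, hCD] at hunion
    refine ⟨fun m hm => ?_, fun m hm => ?_⟩
    · obtain ⟨m, rfl⟩ : ∃ m', m = m' + 1 := ⟨m - 1, by omega⟩
      have := ih.2 m (by omega)
      rw [add_mul]
      omega
    · have := ih.1 m (by omega)
      omega

theorem exists_walk_length_two (h2k : 2 * k ≤ v) (hik : i < k)
    {C D : {A : Finset (Fin v) // A.card = k}}
    (hi : i ≤ #(C.1 ∩ D.1)) (hk : k ≤ #(C.1 ∩ D.1) + Δ) :
    ∃ p : (genJohnsonGraph v k i).Walk C D, p.length = 2 := by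
  have hunion := card_union_add_card_inter C.1 D.1
  have hCD := card_le_card (inter_subset_left (s₁ := C.1) (s₂ := D.1))
  rw [C.2, D.2] at hunion
  rw [C.2] at hCD
  -- `E` meets `C ∩ D` in `a` points, `C \ D` and `D \ C` in `i - a` each, the rest outside
  obtain ⟨E, hE, hEC, hED⟩ := exists_card_inter_eq_of_le (C := C.1) (D := D.1)
    (a := min i (Δ + #(C.1 ∩ D.1) - k)) (b := i - min i (Δ + #(C.1 ∩ D.1) - k))
    (c := i - min i (Δ + #(C.1 ∩ D.1) - k)) (d := k + min i (Δ + #(C.1 ∩ D.1) - k) - 2 * i)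
    (by omega) (by rw [C.2]; omega) (by rw [D.2]; omega) (by rw [Fintype.card_fin]; omega)
  let E' : {A : Finset (Fin v) // A.card = k} := ⟨E, by omega⟩
  have hCE : #(C.1 ∩ E) = i := by rw [inter_comm]; omega
  replace hED : #(E ∩ D.1) = i := by omega
  exact ⟨.cons (adj_of_card_inter_eq hik (D := E') hCE)
    (.cons (adj_of_card_inter_eq hik (C := E') hED) .nil), rfl⟩

theorem exists_walk_length_eq_two_mul (h2k : 2 * k ≤ v) (hik : i < k)
    (B : {A : Finset (Fin v) // A.card = k}) (m : ℕ) :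
    ∀ C : {A : Finset (Fin v) // A.card = k}, i ≤ #(C.1 ∩ B.1) →
      k ≤ #(C.1 ∩ B.1) + m * Δ → ∃ p : (genJohnsonGraph v k i).Walk C B, p.length = 2 * m := by
  induction m with
  | zero =>
    intro C _ hk
    obtain rfl := eq_of_le_card_inter (C := C) (D := B) (by omega)
    exact ⟨.nil, rfl⟩
  | succ m ih =>
    intro C hi hk
    have hunion := card_union_add_card_inter C.1 B.1
    have hCB := card_le_card (inter_subset_left (s₁ := C.1) (s₂ := B.1))
    rw [C.2] at hCB
    -- trade `min Δ (k - |C ∩ B|)` points of `C \ B` for points of `B \ C`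
    obtain ⟨D, hD, hCD, hDB⟩ := exists_card_inter_eq_of_le (C := C.1) (D := B.1)
      (a := #(C.1 ∩ B.1)) (b := k - #(C.1 ∩ B.1) - min Δ (k - #(C.1 ∩ B.1)))
      (c := min Δ (k - #(C.1 ∩ B.1))) (d := 0)
      le_rfl (by rw [C.2]; omega) (by rw [B.2]; omega) (by rw [Fintype.card_fin]; omega)
    let D' : {A : Finset (Fin v) // A.card = k} := ⟨D, by omega⟩
    obtain ⟨p, hp⟩ := exists_walk_length_two h2k hik (C := C) (D := D')
      (by change i ≤ #(C.1 ∩ D); rw [inter_comm]; omega)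
      (by change k ≤ #(C.1 ∩ D) + Δ; rw [inter_comm]; omega)
    obtain ⟨q, hq⟩ := ih D' (by change i ≤ #(D ∩ B.1); omega)
      (by change k ≤ #(D ∩ B.1) + m * Δ; rw [add_mul] at hk; omega)
    exact ⟨p.append q, by rw [Walk.length_append, hp, hq]; ring⟩

theorem exists_walk_length_eq_two_mul_add_one (h2k : 2 * k ≤ v) (hik : i < k)
    (B : {A : Finset (Fin v) // A.card = k}) (m : ℕ) :
    ∀ C : {A : Finset (Fin v) // A.card = k}, i ≤ #(C.1 ∩ B.1) →
      #(C.1 ∩ B.1) ≤ i + m * Δ →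
        ∃ p : (genJohnsonGraph v k i).Walk C B, p.length = 2 * m + 1 := by
  induction m with
  | zero =>
    intro C hi hk
    exact ⟨.cons (adj_of_card_inter_eq hik (by omega)) .nil, rfl⟩
  | succ m ih =>
    intro C hi hk
    have hunion := card_union_add_card_inter C.1 B.1
    have hCB := card_le_card (inter_subset_left (s₁ := C.1) (s₂ := B.1))
    rw [C.2] at hCB
    -- trade `min Δ (|C ∩ B| - i)` points of `C ∩ B` for points outside `C ∪ B`
    obtain ⟨D, hD, hCD, hDB⟩ := exists_card_inter_eq_of_le (C := C.1) (D := B.1)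
      (a := #(C.1 ∩ B.1) - min Δ (#(C.1 ∩ B.1) - i)) (b := k - #(C.1 ∩ B.1))
      (c := 0) (d := min Δ (#(C.1 ∩ B.1) - i))
      (by omega) (by rw [C.2]; omega) (by omega) (by rw [Fintype.card_fin]; omega)
    let D' : {A : Finset (Fin v) // A.card = k} := ⟨D, by omega⟩
    obtain ⟨p, hp⟩ := exists_walk_length_two h2k hik (C := C) (D := D')
      (by change i ≤ #(C.1 ∩ D); rw [inter_comm]; omega)
      (by change k ≤ #(C.1 ∩ D) + Δ; rw [inter_comm]; omega)
    obtain ⟨q, hq⟩ := ih D' (by change i ≤ #(D ∩ B.1); omega)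
      (by change #(D ∩ B.1) ≤ i + m * Δ; rw [add_mul] at hk; omega)
    exact ⟨p.append q, by rw [Walk.length_append, hp, hq]; ring⟩

theorem min_le_length_of_walk (h2k : 2 * k ≤ v) (hΔ : 0 < Δ)
    {A B : {A : Finset (Fin v) // A.card = k}} (p : (genJohnsonGraph v k i).Walk A B) :
    min (2 * ((k - #(A.1 ∩ B.1)) ⌈/⌉ Δ)) (2 * ((#(A.1 ∩ B.1) - i) ⌈/⌉ Δ) + 1) ≤ p.length := by
  obtain ⟨heven, hodd⟩ := card_inter_bounds_of_walk h2k p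
  rcases Nat.even_or_odd' p.length with ⟨m, hm | hm⟩
  · have := heven m hm
    have : (k - #(A.1 ∩ B.1)) ⌈/⌉ Δ ≤ m :=
      (ceilDiv_le_iff_le_mul hΔ).2 (by rw [mul_comm]; omega)
    omega
  · have := hodd m hm
    have : (#(A.1 ∩ B.1) - i) ⌈/⌉ Δ ≤ m :=
      (ceilDiv_le_iff_le_mul hΔ).2 (by rw [mul_comm]; omega)
    omega

end genJohnsonGraph

theorem dist_eq_min_general (v k i : ℕ) (hik : i < k)
    (h2k : 2 * k ≤ v) (hexc : ¬(v = 2 * k ∧ i = 0))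
    (A B : {A : Finset (Fin v) // A.card = k})
    (hxi : i < (A.1 ∩ B.1).card) :
    (genJohnsonGraph v k i).dist A B =
      min (2 * ((k - (A.1 ∩ B.1).card) ⌈/⌉ (v - 2 * k + 2 * i)))
        (2 * (((A.1 ∩ B.1).card - i) ⌈/⌉ (v - 2 * k + 2 * i)) + 1) := by
  have hΔ : 0 < v - 2 * k + 2 * i := by omega
  have hceil (n : ℕ) : n ≤ (n ⌈/⌉ (v - 2 * k + 2 * i)) * (v - 2 * k + 2 * i) := by
    simpa [mul_comm] using le_smul_ceilDiv (b := n) hΔ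
  obtain ⟨p, hp⟩ := genJohnsonGraph.exists_walk_length_eq_two_mul h2k hik B
    ((k - (A.1 ∩ B.1).card) ⌈/⌉ (v - 2 * k + 2 * i)) A hxi.le
    (by have := hceil (k - (A.1 ∩ B.1).card); omega)
  obtain ⟨q, hq⟩ := genJohnsonGraph.exists_walk_length_eq_two_mul_add_one h2k hik B
    (((A.1 ∩ B.1).card - i) ⌈/⌉ (v - 2 * k + 2 * i)) A hxi.le
    (by have := hceil ((A.1 ∩ B.1).card - i); omega)
  obtain ⟨r, hr⟩ := p.reachable.exists_walk_length_eq_dist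
  exact le_antisymm (le_min (hp ▸ SimpleGraph.dist_le p) (hq ▸ SimpleGraph.dist_le q))
    (hr ▸ genJohnsonGraph.min_le_length_of_walk h2k hΔ r)

/-- If `x = |A ∩ B| > i`, then
`dist(A,B) = min {2⌈(k - x)/Δ⌉, 2⌈(x - i)/Δ⌉ + 1}` in `J(v,k,i)`. -/
theorem dist_eq_min (v k i : ℕ) (hik : i < k) (hkv : k < v)
    (h2k : 2 * k ≤ v) (hexc : ¬(v = 2 * k ∧ i = 0))
    (A B : {A : Finset (Fin v) // A.card = k})
    (hxi : i < (A.1 ∩ B.1).card) :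
    (genJohnsonGraph v k i).dist A B =
      min (2 * ((k - (A.1 ∩ B.1).card) ⌈/⌉ (v - 2 * k + 2 * i)))
        (2 * (((A.1 ∩ B.1).card - i) ⌈/⌉ (v - 2 * k + 2 * i)) + 1) :=
  dist_eq_min_general v k i hik h2k hexc A B hxi
end

section
/- Let A and B be vertices of X = J(v,k,i) and let x = |A ∩ B|. Then dist(A,B) = 3 if x < min{i, k − Δ}; dist(A,B) = ⌈(k − x)/(k − i)⌉ if k − Δ ≤ x < i; and dist(A,B) = min{2⌈(k − x)/Δ⌉, 2⌈(x − i)/Δ⌉ + 1} if x ≥ i. -/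
/-!
Fix `B`. The distance from `C` to `B` can only depend on `y = |C ∩ B|`, and when `C` moves to a
neighbour `E`, the new value `|E ∩ B|` ranges over exactly the interval `johnsonStep k i Δ y`:
it is the number of the `i` elements of `C ∩ E` lying in `B` plus the number of the `k - i`
elements of `E \ C` lying in `B`, and each summand independently takes every value its trivial
bounds allow. Hence the claimed formula `f(y)` is the distance as soon as `f(k) = 0`, `f` drops by
at most one along each step of that interval, and from every `y < k` some step lowers it by one;
these last facts are case checks in the three regimes of the formula.
-/

namespace Nat

variable {a b c : ℕ}

lemma ceilDiv_mono (hb : 0 < b) (h : a ≤ c) : a ⌈/⌉ b ≤ c ⌈/⌉ b :=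
  (gc_mul_ceilDiv hb).monotone_l h

lemma add_ceilDiv_self (hb : 0 < b) (a : ℕ) : (a + b) ⌈/⌉ b = a ⌈/⌉ b + 1 := by
  rw [ceilDiv_eq_add_pred_div, ceilDiv_eq_add_pred_div, ← Nat.add_div_right _ hb]
  congr 1
  omega

lemma ceilDiv_le_ceilDiv_add_one (hb : 0 < b) (h : a ≤ c + b) : a ⌈/⌉ b ≤ c ⌈/⌉ b + 1 :=
  add_ceilDiv_self hb c ▸ ceilDiv_mono hb h

lemma ceilDiv_pos (hb : 0 < b) (ha : 0 < a) : 0 < a ⌈/⌉ b := by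
  by_contra h
  have := (ceilDiv_le_iff_le_mul hb).1 (Nat.le_of_not_lt h)
  omega

lemma sub_ceilDiv_add_one (hb : 0 < b) (ha : 0 < a) : (a - b) ⌈/⌉ b + 1 = a ⌈/⌉ b := by
  rcases le_or_gt a b with hab | hab
  · have : a ⌈/⌉ b ≤ 1 := (ceilDiv_le_iff_le_mul hb).2 (by omega)
    have := ceilDiv_pos hb ha
    rw [Nat.sub_eq_zero_of_le hab, zero_ceilDiv]
    omega
  · rw [← add_ceilDiv_self hb, Nat.sub_add_cancel hab.le]

end Nat

namespace Finset

variable {α : Type*} [DecidableEq α] {s t P : Finset α}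

lemma card_le_card_inter_add_card_sdiff_of_subset (hP : P ⊆ s) :
    P.card ≤ (P ∩ t).card + (s \ t).card := by
  rw [← card_inter_add_card_sdiff P t]
  exact Nat.add_le_add_left (card_le_card (sdiff_subset_sdiff hP le_rfl)) _

lemma exists_subset_card_eq_card_inter_eq_s9 {c a : ℕ} (hac : a ≤ c) (ha : a ≤ (s ∩ t).card)
    (hc : c ≤ a + (s \ t).card) : ∃ P ⊆ s, P.card = c ∧ (P ∩ t).card = a := by
  obtain ⟨P₁, hP₁, hP₁a⟩ := exists_subset_card_eq ha
  obtain ⟨P₂, hP₂, hP₂c⟩ := exists_subset_card_eq (s := s \ t) (n := c - a) (by omega)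
  have hdisj : Disjoint P₁ P₂ := (disjoint_sdiff_inter s t).symm.mono hP₁ hP₂
  have hP₁t : P₁ ∩ t = P₁ := inter_eq_left.2 (hP₁.trans inter_subset_right)
  have hP₂t : P₂ ∩ t = ∅ := (disjoint_sdiff_self_left.mono_left hP₂).eq_bot
  refine ⟨P₁ ∪ P₂, union_subset (hP₁.trans inter_subset_left) (hP₂.trans sdiff_subset),
    ?_, ?_⟩
  · rw [card_union_of_disjoint hdisj]
    omega
  · rw [union_inter_distrib_right, hP₁t, hP₂t, union_empty, hP₁a]

end Finset

/-- For `k`-subsets `B, C, E` of a `v`-set with `|C ∩ E| = i` and `|C ∩ B| = y`, the possible values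
of `|E ∩ B|`, where `D = v - 2k + 2i`: the two lower bounds are the least possible numbers of
elements of `B` in `C ∩ E` and in `E \ C` respectively. -/
def johnsonStep (k i D y : ℕ) : Finset ℕ :=
  Finset.Icc ((i + y - k) + (k + i - (y + D))) (min i y + min (k - i) (k - y))

section Step

open Finset

variable {α : Type*} [Fintype α] [DecidableEq α] {k i : ℕ} {B C E : Finset α}

lemma card_inter_add_card_compl_inter (C B : Finset α) :
    (C ∩ B).card + (Cᶜ ∩ B).card = B.card := by
  rw [inter_comm C, inter_comm Cᶜ, ← sdiff_eq_inter_compl, card_inter_add_card_sdiff]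

lemma card_inter_mem_johnsonStep (hB : B.card = k) (hC : C.card = k) (hE : E.card = k)
    (hCE : (C ∩ E).card = i) :
    (E ∩ B).card ∈ johnsonStep k i (Fintype.card α - 2 * k + 2 * i) (C ∩ B).card := by
  have hsplit : (E ∩ B).card = (C ∩ E ∩ B).card + (Cᶜ ∩ E ∩ B).card := by
    rw [inter_assoc, inter_assoc, card_inter_add_card_compl_inter]
  have hin :=
    card_le_card_inter_add_card_sdiff_of_subset (t := B) (inter_subset_left : C ∩ E ⊆ C)
  have hout :=
    card_le_card_inter_add_card_sdiff_of_subset (t := B) (inter_subset_left : Cᶜ ∩ E ⊆ Cᶜ)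
  have hinB :=
    card_le_card (inter_subset_inter_right (inter_subset_left : C ∩ E ⊆ C) : _ ⊆ C ∩ B)
  have houtB :=
    card_le_card (inter_subset_inter_right (inter_subset_left : Cᶜ ∩ E ⊆ Cᶜ) : _ ⊆ Cᶜ ∩ B)
  have hE' := card_inter_add_card_compl_inter C E
  have hB' := card_inter_add_card_compl_inter C B
  have hC' := card_inter_add_card_sdiff C B
  have hCc := card_inter_add_card_sdiff Cᶜ B
  rw [card_compl] at hCc
  have hinE := card_le_card (inter_subset_left : C ∩ E ∩ B ⊆ C ∩ E)
  have houtE := card_le_card (inter_subset_left : Cᶜ ∩ E ∩ B ⊆ Cᶜ ∩ E)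
  rw [johnsonStep, mem_Icc]
  omega

lemma exists_card_inter_eq_of_mem_johnsonStep (hv : 2 * k ≤ Fintype.card α) (hB : B.card = k)
    (hC : C.card = k) {y' : ℕ}
    (hy' : y' ∈ johnsonStep k i (Fintype.card α - 2 * k + 2 * i) (C ∩ B).card) :
    ∃ E : Finset α, E.card = k ∧ (C ∩ E).card = i ∧ (E ∩ B).card = y' := by
  rw [johnsonStep, mem_Icc] at hy'
  have hB' := card_inter_add_card_compl_inter C B
  have hC' := card_inter_add_card_sdiff C B
  have hCc := card_inter_add_card_sdiff Cᶜ B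
  rw [card_compl] at hCc
  obtain ⟨a, b, rfl, hai, hay, hia, hbi, hby, hib⟩ : ∃ a b, y' = a + b ∧ a ≤ i ∧
      a ≤ (C ∩ B).card ∧ i ≤ a + (C \ B).card ∧ b ≤ k - i ∧ b ≤ (Cᶜ ∩ B).card ∧
      k - i ≤ b + (Cᶜ \ B).card := by
    refine ⟨max (i + (C ∩ B).card - k) (y' - min (k - i) (k - (C ∩ B).card)), y' - max
      (i + (C ∩ B).card - k) (y' - min (k - i) (k - (C ∩ B).card)), ?_⟩
    omega
  obtain ⟨P, hPC, hP, hPB⟩ := exists_subset_card_eq_card_inter_eq_s9 hai hay hia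
  obtain ⟨Q, hQC, hQ, hQB⟩ := exists_subset_card_eq_card_inter_eq_s9 hbi hby hib
  have hPQ : Disjoint P Q := disjoint_compl_right.mono hPC hQC
  have hCQ : C ∩ Q = ∅ := disjoint_iff_inter_eq_empty.1 (disjoint_compl_right.mono_right hQC)
  refine ⟨P ∪ Q, ?_, ?_, ?_⟩
  · rw [card_union_of_disjoint hPQ]
    omega
  · rw [inter_union_distrib_left, inter_eq_right.2 hPC, hCQ, union_empty, hP]
  · rw [union_inter_distrib_right,
      card_union_of_disjoint (hPQ.mono inter_subset_left inter_subset_left)]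
    omega

end Step

/-- `D` stands for `Δ = v - 2k + 2i`. -/
def johnsonDist (k i D y : ℕ) : ℕ :=
  if y < min i (k - D) then 3
  else if y < i then (k - y) ⌈/⌉ (k - i)
  else min (2 * ((k - y) ⌈/⌉ D)) (2 * ((y - i) ⌈/⌉ D) + 1)

section Arith

variable {k i D y y' : ℕ}

lemma johnsonDist_of_lt_min (h : y < min i (k - D)) : johnsonDist k i D y = 3 :=
  if_pos h

lemma johnsonDist_of_le_of_lt (h₁ : k - D ≤ y) (h₂ : y < i) :
    johnsonDist k i D y = (k - y) ⌈/⌉ (k - i) := by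
  rw [johnsonDist, if_neg (by omega), if_pos h₂]

lemma johnsonDist_of_le (h : i ≤ y) :
    johnsonDist k i D y = min (2 * ((k - y) ⌈/⌉ D)) (2 * ((y - i) ⌈/⌉ D) + 1) := by
  rw [johnsonDist, if_neg (by omega), if_neg (by omega)]

lemma johnsonDist_k (hik : i ≤ k) : johnsonDist k i D k = 0 := by
  simp [johnsonDist_of_le hik]

variable (hik : i < k) (hD : 0 < D)
include hik hD

lemma johnsonDist_i : johnsonDist k i D i = 1 := by
  have := Nat.ceilDiv_pos hD (a := k - i) (by omega)
  rw [johnsonDist_of_le le_rfl, Nat.sub_self, zero_ceilDiv]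
  omega

lemma two_le_johnsonDist (hyk : y < k) (hyi : y ≠ i) : 2 ≤ johnsonDist k i D y := by
  by_cases h₁ : y < min i (k - D)
  · rw [johnsonDist_of_lt_min h₁]; omega
  by_cases h₂ : y < i
  · rw [johnsonDist_of_le_of_lt (by omega) h₂, ← not_lt, Nat.lt_succ_iff,
      ceilDiv_le_iff_le_mul (show 0 < k - i by omega)]
    omega
  · have := Nat.ceilDiv_pos hD (a := k - y) (by omega)
    have := Nat.ceilDiv_pos hD (a := y - i) (by omega)
    rw [johnsonDist_of_le (by omega)]
    omega

lemma johnsonDist_pos (hyk : y < k) : 0 < johnsonDist k i D y := by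
  rcases eq_or_ne y i with rfl | hyi
  · rw [johnsonDist_i hik hD]; exact one_pos
  · have := two_le_johnsonDist hik hD hyk hyi; omega

variable (hiD : 2 * i ≤ D)
include hiD

lemma johnsonDist_le_succ_of_mem_johnsonStep (hy : y ≤ k) (h : y' ∈ johnsonStep k i D y) :
    johnsonDist k i D y ≤ johnsonDist k i D y' + 1 := by
  rw [johnsonStep, Finset.mem_Icc] at h
  have hki : 0 < k - i := by omega
  by_cases h₁ : y < min i (k - D)
  · rw [johnsonDist_of_lt_min h₁]
    have := two_le_johnsonDist hik hD (y := y') (by omega) (by omega)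
    omega
  by_cases h₂ : y < i
  · rw [johnsonDist_of_le_of_lt (by omega) h₂]
    by_cases h₂' : k - D ≤ y' ∧ y' < i
    · rw [johnsonDist_of_le_of_lt h₂'.1 h₂'.2]
      exact Nat.ceilDiv_le_ceilDiv_add_one hki (by omega)
    · have : (k - y) ⌈/⌉ (k - i) ≤ 2 := (ceilDiv_le_iff_le_mul hki).2 (by omega)
      have := johnsonDist_pos hik hD (y := y') (by omega)
      omega
  rw [johnsonDist_of_le (by omega)]
  by_cases h₃ : y' < i
  · have : (k - y) ⌈/⌉ D ≤ 1 := (ceilDiv_le_iff_le_mul hD).2 (by omega)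
    have := johnsonDist_pos hik hD (y := y') (by omega)
    omega
  · rw [johnsonDist_of_le (by omega)]
    have := Nat.ceilDiv_mono hD (a := y - i) (c := k - y') (by omega)
    have := Nat.ceilDiv_le_ceilDiv_add_one hD (a := k - y) (c := y' - i) (by omega)
    omega

lemma exists_mem_johnsonStep_johnsonDist_lt (hyk : y < k) :
    ∃ y' ∈ johnsonStep k i D y, johnsonDist k i D y' < johnsonDist k i D y := by
  simp only [johnsonStep, Finset.mem_Icc]
  have hki : 0 < k - i := by omega
  by_cases h₁ : y < min i (k - D)
  · refine ⟨i + (k - y - D), by omega, ?_⟩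
    have : (k - (i + (k - y - D))) ⌈/⌉ D ≤ 1 := (ceilDiv_le_iff_le_mul hD).2 (by omega)
    rw [johnsonDist_of_lt_min h₁, johnsonDist_of_le (by omega)]
    omega
  by_cases h₂ : y < i
  · rw [johnsonDist_of_le_of_lt (by omega) h₂]
    by_cases h₂' : y + (k - i) < i
    · refine ⟨y + (k - i), by omega, ?_⟩
      rw [johnsonDist_of_le_of_lt (by omega) h₂',
        show k - y = k - (y + (k - i)) + (k - i) by omega, Nat.add_ceilDiv_self hki]
      exact Nat.lt_succ_self _
    · refine ⟨i, by omega, ?_⟩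
      have := two_le_johnsonDist hik hD hyk (by omega)
      rw [johnsonDist_of_le_of_lt (by omega) h₂] at this
      rw [johnsonDist_i hik hD]
      omega
  rw [johnsonDist_of_le (by omega)]
  by_cases hodd : (y - i) ⌈/⌉ D < (k - y) ⌈/⌉ D
  · -- reflecting `y` exchanges `k - y` and `y - i`
    refine ⟨k - y + i, by omega, ?_⟩
    rw [johnsonDist_of_le (by omega), show k - (k - y + i) = y - i by omega,
      show k - y + i - i = k - y by omega]
    omega
  · refine ⟨i + (k - y - D), by omega, ?_⟩
    have := Nat.sub_ceilDiv_add_one hD (a := k - y) (by omega)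
    rw [johnsonDist_of_le (by omega), show i + (k - y - D) - i = k - y - D by omega]
    omega

end Arith

namespace SimpleGraph

variable {V : Type*} {G : SimpleGraph V} {b : V} {f : V → ℕ}

lemma le_length_add_of_adj_le_succ (hadj : ∀ ⦃u w⦄, G.Adj u w → f u ≤ f w + 1) {u w : V}
    (p : G.Walk u w) : f u ≤ p.length + f w := by
  induction p with
  | nil => simp
  | cons h _ ih =>
    rw [Walk.length_cons]
    have := hadj h
    omega

lemma exists_walk_length_le_of_exists_adj_lt (hb : f b = 0)
    (hdesc : ∀ u, u ≠ b → ∃ w, G.Adj u w ∧ f w < f u) (u : V) :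
    ∃ p : G.Walk u b, p.length ≤ f u := by
  induction hn : f u using Nat.strong_induction_on generalizing u with
  | _ n ih =>
    by_cases hub : u = b
    · subst hub
      exact ⟨.nil, by simp⟩
    obtain ⟨w, huw, hw⟩ := hdesc u hub
    obtain ⟨p, hp⟩ := ih (f w) (by omega) w rfl
    exact ⟨.cons huw p, by rw [Walk.length_cons]; omega⟩

lemma dist_eq_of_adj_le_succ_of_exists_adj_lt (hb : f b = 0)
    (hadj : ∀ ⦃u w⦄, G.Adj u w → f u ≤ f w + 1)
    (hdesc : ∀ u, u ≠ b → ∃ w, G.Adj u w ∧ f w < f u) (u : V) : G.dist u b = f u := by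
  obtain ⟨p, hp⟩ := exists_walk_length_le_of_exists_adj_lt hb hdesc u
  obtain ⟨q, hq⟩ := p.reachable.exists_walk_length_eq_dist
  have := le_length_add_of_adj_le_succ hadj q
  have := dist_le p
  omega

end SimpleGraph

namespace genJohnsonGraph

variable {v k i : ℕ}

lemma card_inter_le (A B : {A : Finset (Fin v) // A.card = k}) : (A.1 ∩ B.1).card ≤ k :=
  (Finset.card_le_card Finset.inter_subset_left).trans_eq A.2

lemma eq_of_card_inter_eq {A B : {A : Finset (Fin v) // A.card = k}} (h : (A.1 ∩ B.1).card = k) :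
    A = B := by
  have hAB : A.1 ∩ B.1 = A.1 :=
    Finset.eq_of_subset_of_card_le Finset.inter_subset_left (by rw [A.2, h])
  exact Subtype.ext
    (Finset.eq_of_subset_of_card_le (hAB ▸ Finset.inter_subset_right) (by rw [A.2, B.2]))

lemma dist_eq_johnsonDist (hik : i < k) (h2k : 2 * k ≤ v)
    (hD : 0 < v - 2 * k + 2 * i) (A B : {A : Finset (Fin v) // A.card = k}) :
    (genJohnsonGraph v k i).dist A B = johnsonDist k i (v - 2 * k + 2 * i) (A.1 ∩ B.1).card := by
  have hv : 2 * k ≤ Fintype.card (Fin v) := by rwa [Fintype.card_fin]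
  have hiD : 2 * i ≤ v - 2 * k + 2 * i := by omega
  refine SimpleGraph.dist_eq_of_adj_le_succ_of_exists_adj_lt
    (f := fun C ↦ johnsonDist k i _ (C.1 ∩ B.1).card) ?_ ?_ ?_ A
  · simp only [Finset.inter_self, B.2, johnsonDist_k hik.le]
  · intro C E hCE
    have := card_inter_mem_johnsonStep B.2 C.2 E.2 hCE.2
    rw [Fintype.card_fin] at this
    exact johnsonDist_le_succ_of_mem_johnsonStep hik hD hiD (card_inter_le C B) this
  · intro C hCB
    have hyk : (C.1 ∩ B.1).card < k := (card_inter_le C B).lt_of_ne (mt eq_of_card_inter_eq hCB)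
    obtain ⟨y', hy', hlt⟩ := exists_mem_johnsonStep_johnsonDist_lt hik hD hiD hyk
    obtain ⟨E, hE, hCE, hEB⟩ :=
      exists_card_inter_eq_of_mem_johnsonStep hv B.2 C.2
        (by simpa only [Fintype.card_fin] using hy')
    refine ⟨⟨E, hE⟩, ⟨fun h ↦ ?_, hCE⟩, by simpa only [hEB] using hlt⟩
    rw [h, Finset.inter_self, hE] at hCE
    omega

end genJohnsonGraph

theorem dist_formula_general (v k i : ℕ) (hik : i < k)
    (h2k : 2 * k ≤ v) (hexc : ¬(v = 2 * k ∧ i = 0))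
    (A B : {A : Finset (Fin v) // A.card = k}) :
    ((A.1 ∩ B.1).card < min i (k - (v - 2 * k + 2 * i)) →
      (genJohnsonGraph v k i).dist A B = 3) ∧
    (k - (v - 2 * k + 2 * i) ≤ (A.1 ∩ B.1).card → (A.1 ∩ B.1).card < i →
      (genJohnsonGraph v k i).dist A B = (k - (A.1 ∩ B.1).card) ⌈/⌉ (k - i)) ∧
    (i ≤ (A.1 ∩ B.1).card →
      (genJohnsonGraph v k i).dist A B =
        min (2 * ((k - (A.1 ∩ B.1).card) ⌈/⌉ (v - 2 * k + 2 * i)))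
          (2 * (((A.1 ∩ B.1).card - i) ⌈/⌉ (v - 2 * k + 2 * i)) + 1)) := by
  rw [genJohnsonGraph.dist_eq_johnsonDist hik h2k (by omega)]
  exact ⟨johnsonDist_of_lt_min, johnsonDist_of_le_of_lt, johnsonDist_of_le⟩

/-- The distance formula for `J(v,k,i)`: with `x = |A ∩ B|` and `Δ = v - 2k + 2i`,
`dist(A,B) = 3` if `x < min {i, k - Δ}`; `dist(A,B) = ⌈(k-x)/(k-i)⌉` if `k - Δ ≤ x < i`;
and `dist(A,B) = min {2⌈(k-x)/Δ⌉, 2⌈(x-i)/Δ⌉ + 1}` if `x ≥ i`. -/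
theorem dist_formula (v k i : ℕ) (hik : i < k) (hkv : k < v)
    (h2k : 2 * k ≤ v) (hexc : ¬(v = 2 * k ∧ i = 0))
    (A B : {A : Finset (Fin v) // A.card = k}) :
    ((A.1 ∩ B.1).card < min i (k - (v - 2 * k + 2 * i)) →
      (genJohnsonGraph v k i).dist A B = 3) ∧
    (k - (v - 2 * k + 2 * i) ≤ (A.1 ∩ B.1).card → (A.1 ∩ B.1).card < i →
      (genJohnsonGraph v k i).dist A B = (k - (A.1 ∩ B.1).card) ⌈/⌉ (k - i)) ∧
    (i ≤ (A.1 ∩ B.1).card →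
      (genJohnsonGraph v k i).dist A B =
        min (2 * ((k - (A.1 ∩ B.1).card) ⌈/⌉ (v - 2 * k + 2 * i)))
          (2 * (((A.1 ∩ B.1).card - i) ⌈/⌉ (v - 2 * k + 2 * i)) + 1)) :=
  dist_formula_general v k i hik h2k hexc A B
end

section
/- Assume k > i + 1. Define f(x) = min{2⌈(k − x)/Δ⌉, 2⌈(x − i)/Δ⌉ + 1} for integers x. Then the maximum of f(x) over x ∈ {i+1, i+2, …, k} equals ⌈(k − i − 1)/Δ⌉ + 1. -/
/-!
Write `A = ⌈(k - x)/Δ⌉` and `B = ⌈(x - i)/Δ⌉`. Always `min (2A) (2B + 1) ≤ A + B`, and since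
`(k - x) + (x - i) = k - i`, the inequality `⌈a/Δ⌉ + ⌈b/Δ⌉ ≤ ⌈(a + b - 1)/Δ⌉ + 1` gives
`A + B ≤ ⌈(k - i - 1)/Δ⌉ + 1 =: M + 1`. The bound is attained at `x = i + 1 + (B - 1)Δ` with
`B = ⌈M/2⌉`, where `A = M + 1 - B`.
-/

namespace Nat

theorem ceilDiv_add_ceilDiv_le {d : ℕ} (hd : 0 < d) (a b : ℕ) :
    a ⌈/⌉ d + b ⌈/⌉ d ≤ (a + b - 1) ⌈/⌉ d + 1 := by
  simp only [ceilDiv_eq_add_pred_div]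
  calc (a + d - 1) / d + (b + d - 1) / d
      ≤ (a + d - 1 + (b + d - 1)) / d := Nat.div_add_div_le_add_div
    _ ≤ (a + b - 1 + d - 1 + d) / d := Nat.div_le_div_right (by omega)
    _ = (a + b - 1 + d - 1) / d + 1 := add_div_right _ hd

theorem mul_add_one_ceilDiv {d : ℕ} (hd : 0 < d) (m : ℕ) : (m * d + 1) ⌈/⌉ d = m + 1 := by
  rw [ceilDiv_eq_add_pred_div, show m * d + 1 + d - 1 = (m + 1) * d by rw [add_mul]; omega,
    Nat.mul_div_cancel _ hd]

theorem sub_mul_ceilDiv {d : ℕ} (hd : 0 < d) (n m : ℕ) : (n - m * d) ⌈/⌉ d = n ⌈/⌉ d - m := by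
  refine eq_of_forall_ge_iff fun c => ?_
  rw [ceilDiv_le_iff_le_mul hd, Nat.sub_le_iff_le_add, Nat.sub_le_iff_le_add,
    ceilDiv_le_iff_le_mul hd, mul_add, mul_comm m d]

end Nat

theorem min_two_mul_ceilDiv_le {d i k x : ℕ} (hd : 0 < d) (hix : i ≤ x) (hxk : x ≤ k) :
    min (2 * ((k - x) ⌈/⌉ d)) (2 * ((x - i) ⌈/⌉ d) + 1) ≤ (k - i - 1) ⌈/⌉ d + 1 := by
  have hsum := Nat.ceilDiv_add_ceilDiv_le hd (k - x) (x - i)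
  rw [show k - x + (x - i) - 1 = k - i - 1 by omega] at hsum
  omega

theorem exists_min_two_mul_ceilDiv_eq {d i k : ℕ} (hd : 0 < d) (hik : i + 1 < k) :
    ∃ x ∈ Set.Icc (i + 1) k,
      min (2 * ((k - x) ⌈/⌉ d)) (2 * ((x - i) ⌈/⌉ d) + 1) = (k - i - 1) ⌈/⌉ d + 1 := by
  set M := (k - i - 1) ⌈/⌉ d
  have hM : 0 < M := by
    rw [pos_iff_ne_zero, Ne, ← Nat.le_zero, ceilDiv_le_iff_le_mul hd]
    omega
  have hMd : d * (M - 1) < k - i - 1 := by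
    by_contra! h
    have := (ceilDiv_le_iff_le_mul hd).2 h
    omega
  set B := (M + 1) / 2
  have hBd : (B - 1) * d ≤ d * (M - 1) := by
    rw [mul_comm]
    exact Nat.mul_le_mul_left d (by omega)
  refine ⟨i + 1 + (B - 1) * d, ⟨by omega, by omega⟩, ?_⟩
  rw [show k - (i + 1 + (B - 1) * d) = k - i - 1 - (B - 1) * d by omega, Nat.sub_mul_ceilDiv hd,
    show i + 1 + (B - 1) * d - i = (B - 1) * d + 1 by omega, Nat.mul_add_one_ceilDiv hd]
  omega

theorem max_dist_value_general (v k i : ℕ)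
    (h2k : 2 * k ≤ v) (hexc : ¬(v = 2 * k ∧ i = 0))
    (hki : i + 1 < k) :
    IsGreatest
      ((fun x : ℕ =>
          min (2 * ((k - x) ⌈/⌉ (v - 2 * k + 2 * i)))
            (2 * ((x - i) ⌈/⌉ (v - 2 * k + 2 * i)) + 1)) '' Set.Icc (i + 1) k)
      ((k - i - 1) ⌈/⌉ (v - 2 * k + 2 * i) + 1) := by
  have hd : 0 < v - 2 * k + 2 * i := by omega
  refine ⟨exists_min_two_mul_ceilDiv_eq hd hki, ?_⟩
  rintro _ ⟨x, ⟨hix, hxk⟩, rfl⟩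
  exact min_two_mul_ceilDiv_le hd (by omega) hxk

/-- For `k > i + 1`, the maximum of
`f(x) = min {2⌈(k - x)/Δ⌉, 2⌈(x - i)/Δ⌉ + 1}` over `x ∈ {i+1, …, k}`
equals `⌈(k - i - 1)/Δ⌉ + 1`, where `Δ = v - 2k + 2i`. -/
theorem max_dist_value (v k i : ℕ) (hik : i < k) (hkv : k < v)
    (h2k : 2 * k ≤ v) (hexc : ¬(v = 2 * k ∧ i = 0))
    (hki : i + 1 < k) :
    IsGreatest
      ((fun x : ℕ =>
          min (2 * ((k - x) ⌈/⌉ (v - 2 * k + 2 * i)))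
            (2 * ((x - i) ⌈/⌉ (v - 2 * k + 2 * i)) + 1)) '' Set.Icc (i + 1) k)
      ((k - i - 1) ⌈/⌉ (v - 2 * k + 2 * i) + 1) :=
  max_dist_value_general v k i h2k hexc hki
end
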